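/- For n ≥ 1 let σ_n be the two-dimensional substitution on {1,2} with base rule 1 ↦ {[(0,0),1]}, 2 ↦ {[(0,0),2]} and concatenation rules: (a,a,(1,0)) ↦ (1,0) and (a,a,(0,1)) ↦ (0,1) for a ∈ {1,2}; (1,2,(1,0)) ↦ (n+1,0); (2,1,(1,0)) ↦ (1−n,0); (1,2,(0,1)) ↦ (n,1); (2,1,(0,1)) ↦ (−n,1). Then: (i) σ_n is non-overlapping on every C_{σ_n}-covered pattern P such that any two cells of P have first coordinates differing by strictly less than n; and (ii) σ_n is overlapping: in the C_{σ_n}-covered pattern P = {[(0,0),2],[(n,0),1]} ∪ {[(i,1),1] : 0 ≤ i ≤ n}, the images of the two distinct cells [(0,0),2] and [(n,0),1] overlap, i.e., there is a C_{σ_n}-path γ of P from [(0,0),2] to [(n,0),1] with supp(σ_base(2)) ∩ (ω_{σ_n}(γ) + supp(σ_base(1))) ≠ ∅. -/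

import Mathlib

open scoped Classical

/-- A combinatorial substitution on alphabet `A` with vectors in `V`:
a base rule sending each letter to a pattern, together with a deterministic
finite set of concatenation rules.  `rule t t' u = some v` encodes the
concatenation rule `(t, t', u) ↦ v`. -/
structure Subst (A : Type*) (V : Type*) [AddCommGroup V] where
  /-- the base rule -/
  base : A → Finset (V × A)
  /-- the image of a letter is a pattern: its cells have distinct vectors -/
  basePat : ∀ t : A, ∀ c ∈ base t, ∀ c' ∈ base t, c.1 = c'.1 → c = c'
  /-- the concatenation rules, as a partial function -/
  rule : A → A → V → Option V
  /-- there are finitely many concatenation rules -/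
  finiteRules : {u : V | ∃ t t', rule t t' u ≠ none}.Finite
  /-- determinism: no two rules with left-hand sides `(t,t',u)` and `(t,t',-u)` -/
  det : ∀ t t' u, (rule t t' u).isSome → (rule t t' (-u)).isSome → u = -u

/-- A pattern is a finite set of cells with pairwise distinct vectors. -/
def IsPattern {V A : Type*} (P : Finset (V × A)) : Prop :=
  ∀ c ∈ P, ∀ c' ∈ P, c.1 = c'.1 → c = c'

namespace Subst

variable {A V : Type*} [AddCommGroup V]

/-- `σ_rule(c, c')`: the relative position of the images of the two cells
`c`, `c'`, when some concatenation rule applies to them. -/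
def ruleVec (σ : Subst A V) (c c' : V × A) : Option V :=
  match σ.rule c.2 c'.2 (c'.1 - c.1) with
  | some v => some v
  | none => (σ.rule c'.2 c.2 (c.1 - c'.1)).map (fun v => -v)

/-- The image vector `ω_σ(γ)` of a path `γ`. -/
def omega (σ : Subst A V) (γ : List (V × A)) : V :=
  ((γ.zip γ.tail).map (fun p => (σ.ruleVec p.1 p.2).getD 0)).sum

/-- A `C_σ`-path: a nonempty sequence of cells in which any two consecutive
cells form a translated copy of a starting pattern of `σ`, and any two cells
with the same vector are equal. -/
def IsPath (σ : Subst A V) (γ : List (V × A)) : Prop :=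
  γ ≠ [] ∧ γ.Chain' (fun c c' => (σ.ruleVec c c').isSome) ∧
    ∀ c ∈ γ, ∀ c' ∈ γ, c.1 = c'.1 → c = c'

/-- A `C_σ`-path of the pattern `P`. -/
def IsPathOf (σ : Subst A V) (P : Finset (V × A)) (γ : List (V × A)) : Prop :=
  σ.IsPath γ ∧ ∀ c ∈ γ, c ∈ P

/-- A `C_σ`-loop of the pattern `P`. -/
def IsLoopOf (σ : Subst A V) (P : Finset (V × A)) (γ : List (V × A)) : Prop :=
  σ.IsPathOf P γ ∧ γ.head? = γ.getLast?

/-- `P` is `C_σ`-covered: any two of its cells are joined by a `C_σ`-path of `P`. -/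
def Covered (σ : Subst A V) (P : Finset (V × A)) : Prop :=
  ∀ c ∈ P, ∀ c' ∈ P,
    ∃ γ, σ.IsPathOf P γ ∧ γ.head? = some c ∧ γ.getLast? = some c'

/-- `σ` is consistent on `P`: any two `C_σ`-paths of `P` with the same first
and last cells have the same image vector. -/
def ConsistentOn (σ : Subst A V) (P : Finset (V × A)) : Prop :=
  ∀ γ γ' : List (V × A), σ.IsPathOf P γ → σ.IsPathOf P γ' →
    γ.head? = γ'.head? → γ.getLast? = γ'.getLast? → σ.omega γ = σ.omega γ'

/-- `σ` is consistent: it is consistent on every `C_σ`-covered pattern. -/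
def Consistent (σ : Subst A V) : Prop :=
  ∀ P : Finset (V × A), IsPattern P → σ.Covered P → σ.ConsistentOn P

/-- The support of the image of a letter. -/
noncomputable def supp (σ : Subst A V) (t : A) : Finset V :=
  (σ.base t).image Prod.fst

/-- `σ` is non-overlapping on `P`: the images of two distinct cells of `P`
joined by a `C_σ`-path of `P` have disjoint supports. -/
def NonOverlappingOn (σ : Subst A V) (P : Finset (V × A)) : Prop :=
  ∀ c ∈ P, ∀ c' ∈ P, c ≠ c' → ∀ γ, σ.IsPathOf P γ →
    γ.head? = some c → γ.getLast? = some c' →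
    ∀ b ∈ σ.supp c'.2, σ.omega γ + b ∉ σ.supp c.2

/-- `σ` is non-overlapping: it is non-overlapping on every `C_σ`-covered pattern. -/
def NonOverlapping (σ : Subst A V) : Prop :=
  ∀ P : Finset (V × A), IsPattern P → σ.Covered P → σ.NonOverlappingOn P

end Subst

/-- The two-letter alphabet `{1, 2}`. -/
inductive B : Type where
  | b1 : B
  | b2 : B
deriving DecidableEq

instance : Fintype B := ⟨{B.b1, B.b2}, fun x => by cases x <;> simp⟩

open B

/-- The vectors `v_1 = (0,0)` and `v_2 = (n,0)`. -/
def vB (n : ℕ) : B → ℤ × ℤ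
  | b1 => (0, 0)
  | b2 => ((n : ℤ), 0)

/-- The horizontal rules of `σ_n`. -/
def hruleN (n : ℕ) : B → B → Option (ℤ × ℤ)
  | b1, b1 => some (1, 0)
  | b2, b2 => some (1, 0)
  | b1, b2 => some ((n : ℤ) + 1, 0)
  | b2, b1 => some (1 - (n : ℤ), 0)

/-- The vertical rules of `σ_n`. -/
def vruleN (n : ℕ) : B → B → Option (ℤ × ℤ)
  | b1, b1 => some (0, 1)
  | b2, b2 => some (0, 1)
  | b1, b2 => some ((n : ℤ), 1)
  | b2, b1 => some (-(n : ℤ), 1)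

/-- The substitution `σ_n` of Example `overlapfar`:
`1 ↦ {[(0,0),1]}`, `2 ↦ {[(0,0),2]}`, with rules
`(a,a,(1,0)) ↦ (1,0)`, `(a,a,(0,1)) ↦ (0,1)`, `(1,2,(1,0)) ↦ (n+1,0)`,
`(2,1,(1,0)) ↦ (1-n,0)`, `(1,2,(0,1)) ↦ (n,1)`, `(2,1,(0,1)) ↦ (-n,1)`. -/
noncomputable def sigmaN (n : ℕ) : Subst B (ℤ × ℤ) where
  base t := {((0, 0), t)}
  basePat := by
    intro t c hc c' hc' _
    rw [Finset.mem_singleton] at hc hc'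
    rw [hc, hc']
  rule t t' u :=
    if u = ((1 : ℤ), (0 : ℤ)) then hruleN n t t'
    else if u = ((0 : ℤ), (1 : ℤ)) then vruleN n t t' else none
  finiteRules := by
    apply Set.Finite.subset
      ((Set.finite_singleton (((0 : ℤ), (1 : ℤ)) : ℤ × ℤ)).insert
        (((1 : ℤ), (0 : ℤ)) : ℤ × ℤ))
    rintro u ⟨t, t', h⟩
    try simp only at h
    split_ifs at h with h1 h2
    · exact Set.mem_insert_iff.2 (Or.inl h1)
    · exact Set.mem_insert_iff.2 (Or.inr h2)
    · exact absurd rfl h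
  det := by
    intro t t' u h1 h2
    exfalso
    try simp only at h1 h2
    have hu : u = ((1 : ℤ), (0 : ℤ)) ∨ u = ((0 : ℤ), (1 : ℤ)) := by
      split_ifs at h1 with hA hB
      · exact Or.inl hA
      · exact Or.inr hB
      · simp at h1
    have hnu : -u = ((1 : ℤ), (0 : ℤ)) ∨ -u = ((0 : ℤ), (1 : ℤ)) := by
      split_ifs at h2 with hC hD
      · exact Or.inl hC
      · exact Or.inr hD
      · simp at h2
    rcases hu with rfl | rfl <;> rcases hnu with h | h <;> revert h <;> decide

/-- The pattern `P_n = {[(0,0),2], [(n,0),1]} ∪ {[(i,1),1] : 0 ≤ i ≤ n}`. -/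
noncomputable def Pn (n : ℕ) : Finset ((ℤ × ℤ) × B) :=
  insert ((((0 : ℤ), (0 : ℤ)) : ℤ × ℤ), b2)
    (insert ((((n : ℤ), (0 : ℤ)) : ℤ × ℤ), b1)
      ((Finset.range (n + 1)).image fun i => ((((i : ℤ), (1 : ℤ)) : ℤ × ℤ), b1)))

/-!
Every concatenation rule of `σ_n` has the form `(t, t', u) ↦ u + v_{t'} - v_t` with
`v_1 = (0,0)` and `v_2 = (n,0)` (`vB n`), so along any `C_{σ_n}`-path the image vector
telescopes to `φ(c') - φ(c)`, where `φ([w,t]) = w + v_t`. Both letters have support `{0}`,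
hence the images of two cells joined by a path overlap exactly when `φ(c) = φ(c')`.
For cells of horizontal distance `< n` this forces `c = c'`, while `[(0,0),2]` and
`[(n,0),1]` both have `φ = (n,0)` and are joined through the row `(0,1), …, (n,1)` of `P_n`.
-/

namespace Subst

variable {A V : Type*} [AddCommGroup V] (σ : Subst A V)

theorem ruleVec_isSome_iff (c c' : V × A) :
    (σ.ruleVec c c').isSome ↔
      (σ.rule c.2 c'.2 (c'.1 - c.1)).isSome ∨ (σ.rule c'.2 c.2 (c.1 - c'.1)).isSome := by
  unfold ruleVec
  cases σ.rule c.2 c'.2 (c'.1 - c.1) <;> simp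

theorem ruleVec_isSome_comm (c c' : V × A) :
    (σ.ruleVec c c').isSome ↔ (σ.ruleVec c' c).isSome := by
  rw [ruleVec_isSome_iff, ruleVec_isSome_iff, or_comm]

variable {σ}

theorem IsPathOf.reverse {P : Finset (V × A)} {γ : List (V × A)} (h : σ.IsPathOf P γ) :
    σ.IsPathOf P γ.reverse := by
  obtain ⟨⟨hne, hchain, hinj⟩, hmem⟩ := h
  refine ⟨⟨by simpa using hne, ?_, ?_⟩, ?_⟩
  · exact List.isChain_reverse.2 (hchain.imp fun c c' h => (σ.ruleVec_isSome_comm c c').1 h)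
  · simpa only [List.mem_reverse] using hinj
  · simpa only [List.mem_reverse] using hmem

theorem IsPathOf.infix {P : Finset (V × A)} {γ δ : List (V × A)} (h : σ.IsPathOf P γ)
    (hδ : δ <:+: γ) (hne : δ ≠ []) : σ.IsPathOf P δ :=
  ⟨⟨hne, h.1.2.1.infix hδ, fun c hc c' hc' => h.1.2.2 c (hδ.subset hc) c' (hδ.subset hc')⟩,
    fun c hc => h.2 c (hδ.subset hc)⟩

theorem IsPathOf.exists_isPathOf_of_mem {P : Finset (V × A)} {γ : List (V × A)}
    (h : σ.IsPathOf P γ) {c c' : V × A} (hc : c ∈ γ) (hc' : c' ∈ γ) :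
    ∃ δ, σ.IsPathOf P δ ∧ δ.head? = some c ∧ δ.getLast? = some c' := by
  obtain ⟨s, t, rfl⟩ := List.append_of_mem hc
  rcases List.mem_append.1 hc' with hs | hct
  · obtain ⟨s₁, s₂, rfl⟩ := List.append_of_mem hs
    refine ⟨(c' :: s₂ ++ [c]).reverse, (h.infix ⟨s₁, t, by simp⟩ (by simp)).reverse, ?_, ?_⟩ <;>
      simp [List.getLast?_cons]
  · rcases List.mem_cons.1 hct with rfl | ht
    · exact ⟨[c'], h.infix ⟨s, t, by simp⟩ (by simp), rfl, rfl⟩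
    · obtain ⟨t₁, t₂, rfl⟩ := List.append_of_mem ht
      exact ⟨c :: t₁ ++ [c'], h.infix ⟨s, t₂, by simp⟩ (by simp), rfl, by simp [List.getLast?_cons]⟩

theorem covered_of_isPathOf {P : Finset (V × A)} {γ : List (V × A)} (h : σ.IsPathOf P γ)
    (hP : ∀ c ∈ P, c ∈ γ) : σ.Covered P :=
  fun c hc c' hc' => h.exists_isPathOf_of_mem (hP c hc) (hP c' hc')

variable (σ) in
def HasPotential (ψ : A → V) : Prop :=
  ∀ t t' u v, σ.rule t t' u = some v → v = u + ψ t' - ψ t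

theorem HasPotential.ruleVec_eq {ψ : A → V} (hψ : σ.HasPotential ψ) {c c' : V × A} {v : V}
    (h : σ.ruleVec c c' = some v) : v = (c'.1 + ψ c'.2) - (c.1 + ψ c.2) := by
  unfold ruleVec at h
  rcases hr : σ.rule c.2 c'.2 (c'.1 - c.1) with _ | w <;> rw [hr] at h
  · obtain ⟨w, hw, rfl⟩ := Option.map_eq_some_iff.1 h
    rw [hψ _ _ _ _ hw]
    abel
  · rw [← Option.some_injective _ h, hψ _ _ _ _ hr]
    abel

theorem HasPotential.omega_eq {ψ : A → V} (hψ : σ.HasPotential ψ) {γ : List (V × A)}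
    (hγ : γ.IsChain fun c c' => (σ.ruleVec c c').isSome) {c c' : V × A}
    (hc : γ.head? = some c) (hc' : γ.getLast? = some c') :
    σ.omega γ = (c'.1 + ψ c'.2) - (c.1 + ψ c.2) := by
  induction γ generalizing c with
  | nil => simp at hc
  | cons d γ ih =>
    obtain rfl := Option.some_injective _ hc
    cases γ with
    | nil =>
      obtain rfl := Option.some_injective _ hc'
      simp [omega]
    | cons e γ =>
      rw [List.isChain_cons_cons] at hγ
      obtain ⟨v, hv⟩ := Option.isSome_iff_exists.1 hγ.1
      have hrest : σ.omega (e :: γ) = (c'.1 + ψ c'.2) - (e.1 + ψ e.2) :=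
        ih hγ.2 rfl (by simpa using hc')
      have hstep : σ.omega (d :: e :: γ) = v + σ.omega (e :: γ) := by
        simp [omega, hv]
      rw [hstep, hrest, hψ.ruleVec_eq hv]
      abel

end Subst

open B

theorem sigmaN_rule_isSome_iff (n : ℕ) (t t' : B) (u : ℤ × ℤ) :
    ((sigmaN n).rule t t' u).isSome ↔ u = (1, 0) ∨ u = (0, 1) := by
  simp only [sigmaN]
  split_ifs <;> cases t <;> cases t' <;> simp_all [hruleN, vruleN]

theorem sigmaN_hasPotential (n : ℕ) : (sigmaN n).HasPotential (vB n) := by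
  intro t t' u v h
  simp only [sigmaN] at h
  split_ifs at h <;> subst_vars <;> cases t <;> cases t' <;>
    simp_all [hruleN, vruleN, vB, Prod.ext_iff] <;> omega

theorem sigmaN_supp (n : ℕ) (t : B) : (sigmaN n).supp t = {0} := by
  simp [Subst.supp, sigmaN]

theorem eq_of_add_vB_eq {n : ℕ} {c c' : (ℤ × ℤ) × B} (hclose : |c.1.1 - c'.1.1| < n)
    (h : c.1 + vB n c.2 = c'.1 + vB n c'.2) : c = c' := by
  obtain ⟨⟨x, y⟩, t⟩ := c
  obtain ⟨⟨x', y'⟩, t'⟩ := c'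
  rw [abs_lt] at hclose
  cases t <;> cases t' <;> simp [vB, Prod.ext_iff] at h hclose ⊢ <;> omega

theorem sigmaN_nonOverlappingOn (n : ℕ) (P : Finset ((ℤ × ℤ) × B))
    (hclose : ∀ c ∈ P, ∀ c' ∈ P, |c.1.1 - c'.1.1| < (n : ℤ)) :
    (sigmaN n).NonOverlappingOn P := by
  intro c hc c' hc' hne γ hγ hhead hlast b hb hoverlap
  rw [sigmaN_supp, Finset.mem_singleton] at hb hoverlap
  rw [hb, add_zero, (sigmaN_hasPotential n).omega_eq hγ.1.2.1 hhead hlast, sub_eq_zero] at hoverlap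
  exact hne (eq_of_add_vB_eq (hclose c hc c' hc') hoverlap.symm)

def pnPath (n : ℕ) : List ((ℤ × ℤ) × B) :=
  ((0, 0), b2) :: ((List.range (n + 1)).map fun i : ℕ => (((i : ℤ), 1), b1)) ++ [(((n : ℤ), 0), b1)]

theorem getLast?_pnPath (n : ℕ) : (pnPath n).getLast? = some (((n : ℤ), 0), b1) := by
  simp [pnPath, List.getLast?_cons]

theorem mem_pnPath {n : ℕ} {c : (ℤ × ℤ) × B} : c ∈ pnPath n ↔ c ∈ Pn n := by
  simp [pnPath, Pn, or_comm, or_left_comm]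

theorem isPattern_Pn {n : ℕ} (hn : 1 ≤ n) : IsPattern (Pn n) := by
  intro c hc c' hc' h
  simp only [Pn, Finset.mem_insert, Finset.mem_image] at hc hc'
  rcases hc with rfl | rfl | ⟨i, hi, rfl⟩ <;> rcases hc' with rfl | rfl | ⟨i', hi', rfl⟩ <;>
    simp [Prod.ext_iff] at h ⊢ <;> omega

theorem isChain_pnPath (n : ℕ) :
    (pnPath n).IsChain fun c c' => ((sigmaN n).ruleVec c c').isSome := by
  have hlink : ∀ c c' : (ℤ × ℤ) × B, c'.1 - c.1 = (1, 0) ∨ c'.1 - c.1 = (0, 1) ∨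
      c.1 - c'.1 = (0, 1) → ((sigmaN n).ruleVec c c').isSome := by
    intro c c' h
    simp only [Subst.ruleVec_isSome_iff, sigmaN_rule_isSome_iff]
    tauto
  have hup : ((sigmaN n).ruleVec ((0, 0), b2) ((0, 1), b1)).isSome := hlink _ _ (by simp)
  have hright : ∀ m : ℕ, ((sigmaN n).ruleVec (((m : ℤ), 1), b1) (((m : ℤ) + 1, 1), b1)).isSome :=
    fun m => hlink _ _ (by simp)
  have hdown : ((sigmaN n).ruleVec (((n : ℤ), 1), b1) (((n : ℤ), 0), b1)).isSome :=
    hlink _ _ (by simp)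
  simp [pnPath, List.isChain_append, List.isChain_cons, List.isChain_map, List.isChain_range_succ,
    List.head?_range, List.getLast?_range, hup, hright, hdown]

theorem isPathOf_pnPath {n : ℕ} (hn : 1 ≤ n) : (sigmaN n).IsPathOf (Pn n) (pnPath n) :=
  ⟨⟨by simp [pnPath], isChain_pnPath n, fun c hc c' hc' =>
    isPattern_Pn hn c (mem_pnPath.1 hc) c' (mem_pnPath.1 hc')⟩, fun _ hc => mem_pnPath.1 hc⟩

theorem covered_Pn {n : ℕ} (hn : 1 ≤ n) : (sigmaN n).Covered (Pn n) :=
  Subst.covered_of_isPathOf (isPathOf_pnPath hn) fun _ hc => mem_pnPath.2 hc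

theorem omega_pnPath (n : ℕ) : (sigmaN n).omega (pnPath n) = 0 := by
  rw [(sigmaN_hasPotential n).omega_eq (isChain_pnPath n) rfl (getLast?_pnPath n)]
  simp [vB]

/-- Example `overlapfar`.  For `n ≥ 1`:
(i) `σ_n` is non-overlapping on every `C_{σ_n}`-covered pattern whose cells
have first coordinates pairwise differing by strictly less than `n`;
(ii) `σ_n` is overlapping: in the `C_{σ_n}`-covered pattern
`P_n = {[(0,0),2], [(n,0),1]} ∪ {[(i,1),1] : 0 ≤ i ≤ n}`, the images of the
distinct cells `[(0,0),2]` and `[(n,0),1]` overlap. -/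
theorem sigmaN_overlapping (n : ℕ) (hn : 1 ≤ n) :
    (∀ P : Finset ((ℤ × ℤ) × B), IsPattern P → (sigmaN n).Covered P →
      (∀ c ∈ P, ∀ c' ∈ P, |c.1.1 - c'.1.1| < (n : ℤ)) →
      (sigmaN n).NonOverlappingOn P) ∧
    ¬ (sigmaN n).NonOverlapping ∧
    (sigmaN n).Covered (Pn n) ∧
    ((((0 : ℤ), (0 : ℤ)) : ℤ × ℤ), b2) ≠ ((((n : ℤ), (0 : ℤ)) : ℤ × ℤ), b1) ∧
    ∃ γ : List ((ℤ × ℤ) × B),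
      (sigmaN n).IsPathOf (Pn n) γ ∧
      γ.head? = some ((((0 : ℤ), (0 : ℤ)) : ℤ × ℤ), b2) ∧
      γ.getLast? = some ((((n : ℤ), (0 : ℤ)) : ℤ × ℤ), b1) ∧
      ∃ v ∈ (sigmaN n).supp b1, (sigmaN n).omega γ + v ∈ (sigmaN n).supp b2 := by
  have hne : (((0, 0), b2) : (ℤ × ℤ) × B) ≠ (((n : ℤ), 0), b1) := by simp
  have hpath := isPathOf_pnPath hn
  have hhead : (pnPath n).head? = some ((0, 0), b2) := rfl
  have hb : (0 : ℤ × ℤ) ∈ (sigmaN n).supp b1 := by simp [sigmaN_supp]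
  have hoverlap : (sigmaN n).omega (pnPath n) + 0 ∈ (sigmaN n).supp b2 := by
    simp [sigmaN_supp, omega_pnPath]
  refine ⟨fun P _ _ => sigmaN_nonOverlappingOn n P, fun hnonOverlapping => ?_, covered_Pn hn, hne,
    pnPath n, hpath, hhead, getLast?_pnPath n, 0, hb, hoverlap⟩
  exact hnonOverlapping (Pn n) (isPattern_Pn hn) (covered_Pn hn) _ (by simp [Pn]) _ (by simp [Pn])
    hne _ hpath hhead (getLast?_pnPath n) 0 hb hoverlap
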